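/- (Lemma on shrinking predecessor sets) Let v be a vertex of a DAG with ranked set L and uniformly random bijective ranking r : L → {1,...,λ}. Fix a decreasing sequence of nonempty sets Γ_1 ⊃ Γ_2 ⊃ ... ⊃ Γ_j of ranked vertices and condition on the event that A_i^r(v) = Γ_i for all 1 ≤ i ≤ j (assuming this event has positive probability). Then for any x ∈ [0,1], Pr[ |A_{j+1}^r(v)| ≤ x·|Γ_j| ] ≥ x under this conditional distribution. -/

import Mathlib

open Classical Finset
open scoped Classical

noncomputable section

variable {V : Type*}

/-- Reachability: `reach adj u v` iff there is a directed path from `u` to `v`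
(including the trivial path, so `reach adj v v` always holds). -/
def reach (adj : V → V → Prop) : V → V → Prop := Relation.ReflTransGen adj

/-- The graph has no (nontrivial) directed cycle. -/
def IsAcyclic (adj : V → V → Prop) : Prop := ∀ x, ¬ Relation.TransGen adj x x

/-- `P(v)`: the set of predecessors of `v` (vertices with a path to `v`, including `v`). -/
def predSet [Fintype V] (adj : V → V → Prop) (v : V) : Finset V :=
  Finset.univ.filter fun u => reach adj u v

/-- `S(v)`: the set of successors of `v` (vertices reachable from `v`, including `v`). -/
def succSet [Fintype V] (adj : V → V → Prop) (v : V) : Finset V :=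
  Finset.univ.filter fun u => reach adj v u

/-- The element of `A` of minimum rank (an arbitrary vertex if `A = ∅`). -/
def argminR [Nonempty V] (r : V → ℕ∞) (A : Finset V) : V :=
  if h : A.Nonempty then (Finset.exists_min_image A r h).choose else Classical.arbitrary V

/-- The sets `A_{i+1}(v)` (0-indexed: `Aset adj L r v i` is the paper's `A_{i+1}(v)`):
`A_1(v) = P(v) ∩ L`, and `A_{i+1}(v) = (S(ℓ_i(v)) ∩ P(v) ∩ L) \ {ℓ_i(v)}` where
`ℓ_i(v)` is the minimum-rank element of `A_i(v)`. -/
def Aset [Fintype V] [Nonempty V] (adj : V → V → Prop) (L : Finset V) (r : V → ℕ∞)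
    (v : V) : ℕ → Finset V
  | 0 => predSet adj v ∩ L
  | i + 1 =>
    if (Aset adj L r v i).Nonempty then
      (succSet adj (argminR r (Aset adj L r v i)) ∩ predSet adj v ∩ L).erase
        (argminR r (Aset adj L r v i))
    else ∅

/-- `ℓ_{i+1}(v)` (0-indexed). -/
def labVertex [Fintype V] [Nonempty V] (adj : V → V → Prop) (L : Finset V) (r : V → ℕ∞)
    (v : V) (i : ℕ) : V := argminR r (Aset adj L r v i)

/-- `k(v)`: the number of indices `i` with `A_{i+1}(v) ≠ ∅` (in a DAG the sets shrink,
so this is the largest `i` with `A_i(v) ≠ ∅`, in the paper's 1-indexed convention). -/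
def kOf [Fintype V] [Nonempty V] (adj : V → V → Prop) (L : Finset V) (r : V → ℕ∞) (v : V) : ℕ :=
  ((Finset.range (Fintype.card V + 1)).filter fun i => (Aset adj L r v i).Nonempty).card

/-- The label `ℓ(v) = (ℓ_1(v), …, ℓ_{k(v)}(v))`. -/
def labelSeq [Fintype V] [Nonempty V] (adj : V → V → Prop) (L : Finset V) (r : V → ℕ∞)
    (v : V) : List V :=
  (List.range (kOf adj L r v)).map (labVertex adj L r v)

/-- The rank sequence `r(ℓ(v))` with `+∞` appended. -/
def rankSeq [Fintype V] [Nonempty V] (adj : V → V → Prop) (L : Finset V) (r : V → ℕ∞)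
    (v : V) : List ℕ∞ :=
  ((labelSeq adj L r v).map r) ++ [⊤]

/-- `ℓ(u) ≺ ℓ(v)`: decreasing lexicographic order on the rank sequences with `+∞` appended. -/
def labLt [Fintype V] [Nonempty V] (adj : V → V → Prop) (L : Finset V) (r : V → ℕ∞)
    (u v : V) : Prop :=
  List.Lex (· < ·) (rankSeq adj L r v) (rankSeq adj L r u)

/-! Conditioned on `A_1, …, A_j`, swapping the ranks of two vertices of `Γ_j` preserves the
conditioning event, so the minimum-rank vertex `ℓ_j` of `Γ_j` is uniformly distributed on `Γ_j`.
Every vertex of `A_{j+1}` is a strict successor of `ℓ_j` inside `Γ_j`, and in any finite strict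
partial order on a set of size `m`, for every `t` at least `min (t + 1) m` elements have at most
`t` strict successors. -/

open Equiv Relation

lemma Equiv.Perm.apply_mem_of_support_subset [Fintype V] {σ : Perm V} {S : Finset V}
    (hσ : σ.support ⊆ S) {u : V} (hu : u ∈ S) : σ u ∈ S := by
  by_cases h : u ∈ σ.support
  · exact hσ (σ.apply_mem_support.2 h)
  · rwa [σ.notMem_support.1 h]

section Argmin

variable [Nonempty V] {r : V → ℕ∞} {A : Finset V}

lemma argminR_mem (h : A.Nonempty) : argminR r A ∈ A := by
  rw [argminR, dif_pos h]
  exact (A.exists_min_image r h).choose_spec.1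

lemma argminR_le (h : A.Nonempty) {u : V} (hu : u ∈ A) : r (argminR r A) ≤ r u := by
  rw [argminR, dif_pos h]
  exact (A.exists_min_image r h).choose_spec.2 u hu

lemma argminR_lt (hr : Set.InjOn r A) (h : A.Nonempty) {u : V} (hu : u ∈ A)
    (hne : u ≠ argminR r A) : r (argminR r A) < r u :=
  (argminR_le h hu).lt_of_ne fun he => hne (hr hu (argminR_mem h) he.symm)

lemma argminR_eq_of_lt {w : V} (hw : w ∈ A) (hmin : ∀ u ∈ A, u ≠ w → r w < r u) :
    argminR r A = w := by
  by_contra hne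
  exact (argminR_le ⟨w, hw⟩ hw).not_gt (hmin _ (argminR_mem ⟨w, hw⟩) hne)

lemma argminR_comp_perm [Fintype V] {σ : Perm V} (hr : Set.InjOn r A) (hA : A.Nonempty)
    (hσ : σ.support ⊆ A) : argminR (r ∘ σ) A = σ⁻¹ (argminR r A) := by
  have hσinv : σ⁻¹.support ⊆ A := by rwa [Perm.support_inv]
  refine argminR_eq_of_lt (Perm.apply_mem_of_support_subset hσinv (argminR_mem hA))
    fun u hu hne => ?_
  rw [Function.comp_apply, Function.comp_apply, Perm.coe_inv, apply_symm_apply]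
  exact argminR_lt hr hA (Perm.apply_mem_of_support_subset hσ hu)
    fun h => hne (by rw [← h, Perm.coe_inv, symm_apply_apply])

end Argmin

section Aset

variable [Fintype V] [Nonempty V] {adj : V → V → Prop} {L : Finset V} {r : V → ℕ∞} {v : V}

lemma mem_Aset_succ {i : ℕ} {u : V} :
    u ∈ Aset adj L r v (i + 1) ↔ (Aset adj L r v i).Nonempty ∧
      u ≠ argminR r (Aset adj L r v i) ∧ reach adj (argminR r (Aset adj L r v i)) u ∧
      u ∈ Aset adj L r v 0 := by
  rw [Aset.eq_2]
  split_ifs with h <;> simp [h, succSet, Aset]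

lemma Aset_subset (i : ℕ) : Aset adj L r v i ⊆ L := by
  cases i with
  | zero => exact inter_subset_right
  | succ i => exact fun u hu => inter_subset_right (mem_Aset_succ.1 hu).2.2.2

lemma argminR_notMem_Aset_succ (i : ℕ) :
    argminR r (Aset adj L r v i) ∉ Aset adj L r v (i + 1) :=
  fun h => (mem_Aset_succ.1 h).2.1 rfl

lemma Aset_succ_subset (hacyc : IsAcyclic adj) (i : ℕ) :
    Aset adj L r v (i + 1) ⊆ Aset adj L r v i := by
  intro u hu
  obtain ⟨hne, hu_ne, hreach, hu₀⟩ := mem_Aset_succ.1 hu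
  cases i with
  | zero => exact hu₀
  | succ i =>
    obtain ⟨hne', hℓ_ne, hℓ_reach, -⟩ := mem_Aset_succ.1 (argminR_mem (r := r) hne)
    have hℓ : TransGen adj (argminR r (Aset adj L r v i)) (argminR r (Aset adj L r v (i + 1))) :=
      (reflTransGen_iff_eq_or_transGen.1 hℓ_reach).resolve_left hℓ_ne
    refine mem_Aset_succ.2 ⟨hne', ?_, hℓ.to_reflTransGen.trans hreach, hu₀⟩
    rintro rfl
    exact hacyc _ (hℓ.trans_left hreach)

lemma Aset_antitone (hacyc : IsAcyclic adj) : Antitone (Aset adj L r v) :=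
  antitone_nat_of_succ_le (Aset_succ_subset hacyc)

lemma Aset_succ_subset_filter_transGen (hacyc : IsAcyclic adj) (i : ℕ) :
    Aset adj L r v (i + 1) ⊆
      (Aset adj L r v i).filter (TransGen adj (argminR r (Aset adj L r v i))) := by
  intro u hu
  obtain ⟨-, hu_ne, hreach, -⟩ := mem_Aset_succ.1 hu
  exact mem_filter.2 ⟨Aset_succ_subset hacyc i hu,
    (reflTransGen_iff_eq_or_transGen.1 hreach).resolve_left hu_ne⟩

/-- Each earlier minimum `ℓ_i` lies outside `A_{i+1} ⊇ A_k ⊇ σ.support`, so it is fixed by `σ`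
and stays the minimum. -/
lemma Aset_comp_perm (hacyc : IsAcyclic adj) (hr : Set.InjOn r L) {σ : Perm V} {k : ℕ}
    (hσ : σ.support ⊆ Aset adj L r v k) {i : ℕ} (hi : i ≤ k) :
    Aset adj L (r ∘ σ) v i = Aset adj L r v i := by
  induction i with
  | zero => rfl
  | succ i ih =>
    have hσi : σ.support ⊆ Aset adj L r v i := hσ.trans (Aset_antitone hacyc (by omega))
    have hℓ : argminR (r ∘ σ) (Aset adj L r v i) = argminR r (Aset adj L r v i) := by
      by_cases hne : (Aset adj L r v i).Nonempty
      · rw [argminR_comp_perm (hr.mono (Aset_subset i)) hne hσi, Perm.inv_eq_iff_eq, eq_comm,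
          ← Perm.notMem_support]
        exact fun h => argminR_notMem_Aset_succ i (Aset_antitone hacyc hi (hσ h))
      · simp only [argminR, dif_neg hne]
    rw [Aset.eq_2, Aset.eq_2, ih (by omega), hℓ]

end Aset

section Counting

variable {α β : Type*}

lemma card_filter_comp_eq_mul {s : Finset α} {t : Finset β} {f : α → β}
    (hf : ∀ a ∈ s, f a ∈ t) {c : ℕ} (hc : ∀ b ∈ t, #(s.filter (f · = b)) = c) (P : β → Prop)
    [DecidablePred P] :
    #(s.filter fun a => P (f a)) = #(t.filter P) * c := by
  have hfib : ∀ b ∈ t.filter P, #((s.filter fun a => P (f a)).filter (f · = b)) = c := by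
    intro b hb
    obtain ⟨hbt, hPb⟩ := mem_filter.1 hb
    rw [filter_filter, ← hc b hbt]
    exact congrArg card (filter_congr fun a _ => ⟨And.right, fun h => ⟨by simpa [h] using hPb, h⟩⟩)
  have hmaps : ∀ a ∈ s.filter fun a => P (f a), f a ∈ t.filter P := fun a ha =>
    mem_filter.2 ⟨hf a (mem_filter.1 ha).1, (mem_filter.1 ha).2⟩
  rw [card_eq_sum_card_fiberwise hmaps, sum_congr rfl hfib, sum_const, smul_eq_mul]

variable (R : α → α → Prop) [IsTrans α R] [Std.Irrefl R]

lemma card_filter_rel_lt_of_rel (S : Finset α) {w u : α} (hwu : R w u) (hu : u ∈ S) :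
    #(S.filter (R u)) < #(S.filter (R w)) := by
  refine card_lt_card ⟨monotone_filter_right S fun _ _ => _root_.trans hwu, fun h => ?_⟩
  exact irrefl u (mem_filter.1 (h (mem_filter.2 ⟨hu, hwu⟩))).2

/-- Otherwise an element of `S` with more than `t` successors in `S`, minimising the number
of successors, would have all its successors among the fewer than `t + 1` others. -/
lemma min_succ_le_card_filter_card_rel_le (S : Finset α) (t : ℕ) :
    min (t + 1) #S ≤ #(S.filter fun w => #(S.filter (R w)) ≤ t) := by
  set G := S.filter fun w => #(S.filter (R w)) ≤ t
  by_contra! hG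
  have hGt : #G ≤ t := by omega
  obtain ⟨w, hw, hmin⟩ := (S \ G).exists_min_image (fun w => #(S.filter (R w)))
    (sdiff_nonempty.2 fun h => (card_le_card h).not_gt (by omega))
  obtain ⟨hwS, hwG⟩ := mem_sdiff.1 hw
  refine hwG (mem_filter.2 ⟨hwS, le_trans (card_le_card fun u hu => ?_) hGt⟩)
  obtain ⟨huS, hwu⟩ := mem_filter.1 hu
  by_contra huG
  exact (hmin u (mem_sdiff.2 ⟨huS, huG⟩)).not_gt (card_filter_rel_lt_of_rel R S hwu huS)

lemma mul_card_le_card_filter_card_rel_le (S : Finset α) {x : ℝ} (hx0 : 0 ≤ x) (hx1 : x ≤ 1) :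
    x * #S ≤ #(S.filter fun w => (#(S.filter (R w)) : ℝ) ≤ x * #S) := by
  have hxS : 0 ≤ x * #S := by positivity
  have hfloor := min_succ_le_card_filter_card_rel_le R S ⌊x * #S⌋₊
  simp only [← Nat.le_floor_iff hxS]
  calc x * #S ≤ ((min (⌊x * #S⌋₊ + 1) #S : ℕ) : ℝ) := by
        rw [Nat.cast_min, Nat.cast_add_one]
        exact le_min (Nat.lt_floor_add_one _).le (mul_le_of_le_one_left (Nat.cast_nonneg _) hx1)
    _ ≤ _ := by exact_mod_cast hfloor

end Counting

section Rankings

variable {L : Finset V}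

def rankOfEquiv (L : Finset V) (ρ : {x // x ∈ L} ≃ Fin L.card) (w : V) : ℕ∞ :=
  if h : w ∈ L then (((ρ ⟨w, h⟩ : ℕ) + 1 : ℕ) : ℕ∞) else ⊤

lemma rankOfEquiv_injOn (ρ : {x // x ∈ L} ≃ Fin L.card) : Set.InjOn (rankOfEquiv L ρ) L := by
  intro u hu u' hu' h
  simp only [rankOfEquiv, dif_pos (mem_coe.1 hu), dif_pos (mem_coe.1 hu'), Nat.cast_inj,
    Nat.add_right_cancel_iff, Fin.val_inj, EmbeddingLike.apply_eq_iff_eq, Subtype.mk.injEq] at h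
  exact h

lemma rankOfEquiv_trans (τ : Perm {x // x ∈ L}) (ρ : {x // x ∈ L} ≃ Fin L.card) :
    rankOfEquiv L (τ.trans ρ) = rankOfEquiv L ρ ∘ Perm.ofSubtype τ := by
  ext w
  by_cases hw : w ∈ L
  · have hτw : Perm.ofSubtype τ w = τ ⟨w, hw⟩ := Perm.ofSubtype_apply_of_mem τ hw
    simp only [Function.comp_apply, hτw, rankOfEquiv, dif_pos hw, dif_pos (τ ⟨w, hw⟩).2,
      trans_apply]
  · simp only [Function.comp_apply, Perm.ofSubtype_apply_of_not_mem τ hw, rankOfEquiv,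
      dif_neg hw]

end Rankings

section Conditioning

variable [Fintype V] [Nonempty V] {adj : V → V → Prop} {L : Finset V} {v : V}
  {R : Finset ({x // x ∈ L} ≃ Fin L.card)} {Γ : ℕ → Finset V} {k : ℕ}

lemma swap_trans_mem_and_argminR_eq (hacyc : IsAcyclic adj)
    (hR : ∀ ρ, ρ ∈ R ↔ ∀ i ≤ k, Aset adj L (rankOfEquiv L ρ) v i = Γ i)
    {w w' : V} (hw : w ∈ Γ k) (hw' : w' ∈ Γ k) (hwL : w ∈ L) (hw'L : w' ∈ L)
    {ρ : {x // x ∈ L} ≃ Fin L.card} (hρ : ρ ∈ R) :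
    (swap ⟨w, hwL⟩ ⟨w', hw'L⟩).trans ρ ∈ R ∧
      argminR (rankOfEquiv L ((swap ⟨w, hwL⟩ ⟨w', hw'L⟩).trans ρ)) (Γ k) =
        swap w w' (argminR (rankOfEquiv L ρ) (Γ k)) := by
  have hΓ := (hR ρ).1 hρ
  have hrank : rankOfEquiv L ((swap ⟨w, hwL⟩ ⟨w', hw'L⟩).trans ρ) =
      rankOfEquiv L ρ ∘ swap w w' := by
    rw [rankOfEquiv_trans, Perm.ofSubtype_swap_eq]
  have hsupp : (swap w w').support ⊆ Aset adj L (rankOfEquiv L ρ) v k := by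
    intro u hu
    rw [hΓ k le_rfl]
    rcases (swap_apply_ne_self_iff.1 (Perm.mem_support.1 hu)).2 with rfl | rfl <;> assumption
  refine ⟨(hR _).2 fun i hi => ?_, ?_⟩
  · rw [hrank, Aset_comp_perm hacyc (rankOfEquiv_injOn ρ) hsupp hi, hΓ i hi]
  · rw [hrank, ← hΓ k le_rfl, argminR_comp_perm ((rankOfEquiv_injOn ρ).mono (Aset_subset k))
      ⟨w, hΓ k le_rfl ▸ hw⟩ hsupp, swap_inv]

lemma card_filter_argminR_eq_le (hacyc : IsAcyclic adj)
    (hR : ∀ ρ, ρ ∈ R ↔ ∀ i ≤ k, Aset adj L (rankOfEquiv L ρ) v i = Γ i) (hΓL : Γ k ⊆ L)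
    {w w' : V} (hw : w ∈ Γ k) (hw' : w' ∈ Γ k) :
    #(R.filter fun ρ => argminR (rankOfEquiv L ρ) (Γ k) = w) ≤
      #(R.filter fun ρ => argminR (rankOfEquiv L ρ) (Γ k) = w') := by
  set τ : Perm {x // x ∈ L} := swap ⟨w, hΓL hw⟩ ⟨w', hΓL hw'⟩
  refine card_le_card_of_injOn (τ.trans ·) (fun ρ hρ => ?_) fun ρ₁ _ ρ₂ _ h => ?_
  · obtain ⟨hρR, hρw⟩ := mem_filter.1 hρ
    obtain ⟨hmem, hmin⟩ := swap_trans_mem_and_argminR_eq hacyc hR hw hw' _ _ hρR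
    exact mem_filter.2 ⟨hmem, by rw [hmin, hρw, swap_apply_left]⟩
  · refine Equiv.ext fun x => ?_
    simpa [τ] using congrArg (fun e => e (τ x)) h

theorem mul_card_le_card_filter_card_Aset_succ_le (hacyc : IsAcyclic adj)
    (hR : ∀ ρ, ρ ∈ R ↔ ∀ i ≤ k, Aset adj L (rankOfEquiv L ρ) v i = Γ i)
    {x : ℝ} (hx0 : 0 ≤ x) (hx1 : x ≤ 1) :
    x * #R ≤ #(R.filter fun ρ =>
      (#(Aset adj L (rankOfEquiv L ρ) v (k + 1)) : ℝ) ≤ x * #(Γ k)) := by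
  rcases R.eq_empty_or_nonempty with rfl | ⟨ρ₀, hρ₀⟩
  · simp
  have hΓL : Γ k ⊆ L := (hR ρ₀).1 hρ₀ k le_rfl ▸ Aset_subset k
  rcases (Γ k).eq_empty_or_nonempty with hempty | ⟨w₀, hw₀⟩
  · rw [filter_true_of_mem fun ρ hρ => ?_]
    · exact mul_le_of_le_one_left (Nat.cast_nonneg _) hx1
    have hsucc := Aset_succ_subset hacyc k (adj := adj) (L := L) (v := v) (r := rankOfEquiv L ρ)
    rw [(hR ρ).1 hρ k le_rfl, hempty, subset_empty] at hsucc
    simp [hsucc, hempty]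
  set f := fun ρ => argminR (rankOfEquiv L ρ) (Γ k)
  have hf : ∀ ρ ∈ R, f ρ ∈ Γ k := fun ρ _ => argminR_mem ⟨w₀, hw₀⟩
  have hfib : ∀ w ∈ Γ k, #(R.filter (f · = w)) = #(R.filter (f · = w₀)) := fun w hw =>
    le_antisymm (card_filter_argminR_eq_le hacyc hR hΓL hw hw₀)
      (card_filter_argminR_eq_le hacyc hR hΓL hw₀ hw)
  have : Std.Irrefl (TransGen adj) := ⟨hacyc⟩
  set good := (Γ k).filter fun w => (#((Γ k).filter (TransGen adj w)) : ℝ) ≤ x * #(Γ k)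
  calc x * #R = x * #(Γ k) * #(R.filter (f · = w₀)) := by
        have hcard : #R = #(Γ k) * #(R.filter (f · = w₀)) := by
          simpa using card_filter_comp_eq_mul hf hfib fun _ => True
        rw [hcard, Nat.cast_mul, mul_assoc]
    _ ≤ #good * #(R.filter (f · = w₀)) := by
        gcongr
        exact mul_card_le_card_filter_card_rel_le (TransGen adj) (Γ k) hx0 hx1
    _ = #(R.filter fun ρ => f ρ ∈ good) := by
        rw [card_filter_comp_eq_mul hf hfib (· ∈ good), filter_mem_eq_inter,
          inter_eq_right.2 (filter_subset _ _), Nat.cast_mul]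
    _ ≤ _ := by
        refine Nat.cast_le.2 (card_le_card (monotone_filter_right R fun ρ hρ hgood => ?_))
        have hAk := (hR ρ).1 hρ k le_rfl
        have hsucc := Aset_succ_subset_filter_transGen hacyc k (adj := adj) (L := L) (v := v)
          (r := rankOfEquiv L ρ)
        rw [hAk] at hsucc
        exact (Nat.cast_le.2 (card_le_card hsucc)).trans (mem_filter.1 hgood).2

end Conditioning

theorem shrinking_predecessor_sets_general [Fintype V] [DecidableEq V] [Nonempty V]
    (adj : V → V → Prop) (hacyc : IsAcyclic adj)
    (L : Finset V) (v : V) (j : ℕ) (hj : 0 < j)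
    (Γ : ℕ → Finset V)
    (rOf : ({x // x ∈ L} ≃ Fin L.card) → V → ℕ∞)
    (hrOf : ∀ ρ w, rOf ρ w = if h : w ∈ L then (((ρ ⟨w, h⟩ : ℕ) + 1 : ℕ) : ℕ∞) else ⊤)
    (Rset : Finset ({x // x ∈ L} ≃ Fin L.card))
    (hRset : Rset = Finset.univ.filter fun ρ => ∀ i < j, Aset adj L (rOf ρ) v i = Γ i) :
    ∀ x ∈ Set.Icc (0 : ℝ) 1,
      x * (Rset.card : ℝ) ≤
        ((Rset.filter fun ρ =>
          ((Aset adj L (rOf ρ) v j).card : ℝ) ≤ x * ((Γ (j - 1)).card : ℝ)).card : ℝ) := by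
  rintro x ⟨hx0, hx1⟩
  obtain ⟨k, rfl⟩ := Nat.exists_eq_add_one_of_ne_zero hj.ne'
  obtain rfl : rOf = rankOfEquiv L := funext₂ fun ρ w => by rw [hrOf, rankOfEquiv]; congr
  rw [Nat.add_sub_cancel]
  refine mul_card_le_card_filter_card_Aset_succ_le hacyc (fun ρ => ?_) hx0 hx1
  simp [hRset]

/-- Lemma 1 of the paper: conditioned on `A_i^r(v) = Γ_i` for `1 ≤ i ≤ j`
(a nonempty event over uniformly random bijective rankings `r : L → {1,…,λ}`), for any
`x ∈ [0,1]` the probability that `|A_{j+1}^r(v)| ≤ x·|Γ_j|` is at least `x`.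
(0-indexed: `Aset … (i-1)` is the paper's `A_i`, so the condition is on indices `< j`
and the conclusion concerns `Aset … j = A_{j+1}`.) -/
theorem shrinking_predecessor_sets [Fintype V] [DecidableEq V] [Nonempty V]
    (adj : V → V → Prop) (hacyc : IsAcyclic adj)
    (L : Finset V) (v : V) (j : ℕ) (hj : 0 < j)
    (Γ : ℕ → Finset V)
    (hΓL : ∀ i < j, Γ i ⊆ L) (hΓne : ∀ i < j, (Γ i).Nonempty)
    (hchain : ∀ i : ℕ, i + 1 < j → Γ (i + 1) ⊂ Γ i)
    (rOf : ({x // x ∈ L} ≃ Fin L.card) → V → ℕ∞)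
    (hrOf : ∀ ρ w, rOf ρ w = if h : w ∈ L then (((ρ ⟨w, h⟩ : ℕ) + 1 : ℕ) : ℕ∞) else ⊤)
    (Rset : Finset ({x // x ∈ L} ≃ Fin L.card))
    (hRset : Rset = Finset.univ.filter fun ρ => ∀ i < j, Aset adj L (rOf ρ) v i = Γ i)
    (hne : Rset.Nonempty) :
    ∀ x ∈ Set.Icc (0 : ℝ) 1,
      x * (Rset.card : ℝ) ≤
        ((Rset.filter fun ρ =>
          ((Aset adj L (rOf ρ) v j).card : ℝ) ≤ x * ((Γ (j - 1)).card : ℝ)).card : ℝ) :=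
  shrinking_predecessor_sets_general adj hacyc L v j hj Γ rOf hrOf Rset hRset
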